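/- arXiv:math/0702638 — 4 statements merged into one kernel-verified Lean document; each statement's English description precedes it below -/
import Mathlib

section
/- Let P be the 4×4 matrix with rows (2,1,1,0), (0,3,0,0), (0,1,2,1), (0,1,1,3), u = (1,0,0,0)ᵀ, e = (1,1,1,1)ᵀ, and a_n = uᵀ P^n e. Then a_n - 5a_{n-1} + 5a_{n-2} = 0 for all n ≥ 2. -/
/-!
The vector `w = P²e - 5Pe + 5e = (0, -1, 1, 2)` is an eigenvector of `P` for the eigenvalue `3`
(this is the factor `t - 3` of the annihilator `(t - 3)(t² - 5t + 5)` of `e`) and is orthogonal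
to `u`. Hence `a (n + 2) - 5 a (n + 1) + 5 a n = uᵀ Pⁿ w = 3ⁿ uᵀ w = 0`.
-/

namespace Matrix

variable {R ι : Type*} [CommRing R] [Fintype ι] [DecidableEq ι]

theorem pow_mulVec_of_mulVec_eq_smul {P : Matrix ι ι R} {w : ι → R} {μ : R}
    (hw : P *ᵥ w = μ • w) (k : ℕ) : P ^ k *ᵥ w = μ ^ k • w := by
  induction k with
  | zero => simp
  | succ k ih =>
    rw [pow_succ, ← mulVec_mulVec, hw, mulVec_smul, ih, smul_smul, pow_succ, mul_comm]

theorem dotProduct_pow_mulVec_of_mulVec_eq_smul {P : Matrix ι ι R} {w : ι → R} {μ : R}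
    (hw : P *ᵥ w = μ • w) (u : ι → R) (k : ℕ) : u ⬝ᵥ (P ^ k *ᵥ w) = μ ^ k * (u ⬝ᵥ w) := by
  rw [pow_mulVec_of_mulVec_eq_smul hw, dotProduct_smul, smul_eq_mul]

theorem dotProduct_pow_mulVec_linearRecurrence {P : Matrix ι ι R} {u e w : ι → R} {c d : R}
    (he : P *ᵥ (P *ᵥ e) - c • (P *ᵥ e) + d • e = w) (hw : ∀ k, u ⬝ᵥ (P ^ k *ᵥ w) = 0)
    (k : ℕ) :
    u ⬝ᵥ (P ^ (k + 2) *ᵥ e) - c * u ⬝ᵥ (P ^ (k + 1) *ᵥ e) + d * u ⬝ᵥ (P ^ k *ᵥ e) = 0 := by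
  rw [← hw k, ← he, pow_add, pow_add, pow_two, pow_one, ← mulVec_mulVec, ← mulVec_mulVec,
    ← mulVec_mulVec, mulVec_add, mulVec_sub, mulVec_smul, mulVec_smul, dotProduct_add,
    dotProduct_sub, dotProduct_smul, dotProduct_smul, smul_eq_mul, smul_eq_mul]

end Matrix

open Matrix in
/-- For the 4×4 production matrix with rows (2,1,1,0), (0,3,0,0), (0,1,2,1), (0,1,1,3),
the induced sequence `a_n = uᵀ P^n e` satisfies `a_n - 5a_{n-1} + 5a_{n-2} = 0`. -/
theorem stmt5 (a : ℕ → ℚ)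
    (ha : ∀ n, a n = dotProduct ![1, 0, 0, 0]
      (((!![2, 1, 1, 0; 0, 3, 0, 0; 0, 1, 2, 1; 0, 1, 1, 3] :
        Matrix (Fin 4) (Fin 4) ℚ) ^ n).mulVec ![1, 1, 1, 1])) :
    ∀ n, a (n + 2) - 5 * a (n + 1) + 5 * a n = 0 := by
  set P : Matrix (Fin 4) (Fin 4) ℚ := !![2, 1, 1, 0; 0, 3, 0, 0; 0, 1, 2, 1; 0, 1, 1, 3]
  have hPe : P *ᵥ ![1, 1, 1, 1] = ![4, 3, 4, 5] := by
    ext i; fin_cases i <;> simp [P, mulVec, dotProduct, Fin.sum_univ_four] <;> norm_num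
  have hP2e : P *ᵥ ![4, 3, 4, 5] = ![15, 9, 16, 22] := by
    ext i; fin_cases i <;> simp [P, mulVec, dotProduct, Fin.sum_univ_four] <;> norm_num
  have hPw : P *ᵥ ![0, -1, 1, 2] = (3 : ℚ) • ![0, -1, 1, 2] := by
    ext i; fin_cases i <;> simp [P, mulVec, dotProduct, Fin.sum_univ_four]; norm_num
  have he : P *ᵥ (P *ᵥ ![1, 1, 1, 1]) - (5 : ℚ) • (P *ᵥ ![1, 1, 1, 1]) + (5 : ℚ) • ![1, 1, 1, 1]
      = ![0, -1, 1, 2] := by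
    rw [hPe, hP2e]; ext i; fin_cases i <;> norm_num
  have hw : ∀ k, ![1, 0, 0, 0] ⬝ᵥ (P ^ k *ᵥ ![0, -1, 1, 2]) = 0 := fun k => by
    rw [dotProduct_pow_mulVec_of_mulVec_eq_smul hPw]
    simp [dotProduct, Fin.sum_univ_four]
  intro n
  rw [ha, ha, ha]
  exact dotProduct_pow_mulVec_linearRecurrence he hw n
end

section
/- Let P be the infinite ℕ×ℕ matrix with P(0,1)=1, P(n,n)=n for n≥1, and P(n,n+1)=1 for n≥1, all other entries 0 (the Bell production matrix). For each n ≥ 1 let P_n denote the upper-left n×n submatrix. Then the first row of exp(zP_n) equals (1, e^z-1, (e^z-1)²/2!, ..., (e^z-1)^{n-1}/(n-1)!), as an identity of formal power series / analytic functions in z. -/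
/-!
The functions `f k z = (e^z - 1)^k / k!` satisfy `f₀' = 0` and
`f_{k+1}' = f_k + (k + 1) f_{k+1}` (write `e^z = (e^z - 1) + 1`), which says that the row vector
`f(z) = (f₀(z), …, f_{n-1}(z))` solves `f' = f P_n`, with `f(0) = e₀`. In any complete normed
algebra a solution of `F' = F A` is `F(z) = F(0) exp(zA)`, because `F(z) exp(-zA)` has zero
derivative. Hence `f(z) = e₀ exp(zP_n)` is the first row of `exp(zP_n)`.
-/

open NormedSpace
open scoped Matrix

theorem eq_mul_exp_smul_of_hasDerivAt {𝕂 𝔸 : Type*} [RCLike 𝕂] [NormedRing 𝔸] [NormedAlgebra 𝕂 𝔸]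
    [CompleteSpace 𝔸] {F : 𝕂 → 𝔸} {A : 𝔸} (hF : ∀ t, HasDerivAt F (F t * A) t) (t : 𝕂) :
    F t = F 0 * exp (t • A) := by
  have hG : ∀ s, HasDerivAt (fun s => F s * exp ((-s) • A)) 0 s := by
    intro s
    have hE : HasDerivAt (fun s : 𝕂 => exp ((-s) • A)) (-(A * exp ((-s) • A))) s := by
      simpa [Function.comp_def] using
        (hasDerivAt_exp_smul_const' A (-s)).scomp s (hasDerivAt_neg s)
    simpa [mul_assoc] using (hF s).fun_mul hE
  have hconst : F t * exp ((-t) • A) = F 0 * exp ((-0 : 𝕂) • A) :=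
    is_const_of_deriv_eq_zero (fun s => (hG s).differentiableAt) (fun s => (hG s).deriv) t 0
  -- `exp_add_of_commute` asks for a normed `ℚ`-algebra structure
  let _ := NormedAlgebra.restrictScalars ℚ 𝕂 𝔸
  calc F t = F t * exp ((-t) • A) * exp (t • A) := by
        rw [mul_assoc, ← exp_add_of_commute (((Commute.refl A).smul_left _).smul_right _),
          neg_smul, neg_add_cancel, exp_zero, mul_one]
    _ = F 0 * exp (t • A) := by rw [hconst, neg_zero, zero_smul, exp_zero, mul_one]

theorem Matrix.sum_smul_single_mul {ι R : Type*} [Fintype ι] [DecidableEq ι] [CommSemiring R]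
    (i : ι) (c : ι → R) (M : Matrix ι ι R) :
    (∑ k, c k • Matrix.single i k 1) * M = ∑ k, (c ᵥ* M) k • Matrix.single i k 1 := by
  ext a b
  by_cases ha : a = i
  · subst ha
    simp [Matrix.sum_apply, Matrix.single_apply, Matrix.mul_apply, Matrix.vecMul, dotProduct]
  · simp [Matrix.sum_apply, Matrix.mul_apply, Ne.symm ha]

/-- The exponential generating function of the Stirling numbers of the second kind `S(·, k)`. -/
noncomputable def stirlingEGF (k : ℕ) (t : ℝ) : ℝ := (Real.exp t - 1) ^ k / k.factorial

lemma stirlingEGF_zero : stirlingEGF 0 = fun _ => 1 := by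
  ext t
  simp [stirlingEGF]

lemma stirlingEGF_apply_zero (k : ℕ) : stirlingEGF k 0 = if k = 0 then 1 else 0 := by
  cases k <;> simp [stirlingEGF]

lemma hasDerivAt_stirlingEGF_succ (k : ℕ) (t : ℝ) :
    HasDerivAt (stirlingEGF (k + 1)) (stirlingEGF k t + (k + 1) * stirlingEGF (k + 1) t) t := by
  refine ((((Real.hasDerivAt_exp t).sub_const 1).fun_pow (k + 1)).div_const
    ((k + 1).factorial : ℝ)).congr_deriv ?_
  rw [stirlingEGF, stirlingEGF, Nat.factorial_succ, Nat.add_sub_cancel]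
  push_cast
  field_simp
  ring

def bellProductionMatrix (n : ℕ) : Matrix (Fin n) (Fin n) ℝ :=
  Matrix.of fun i j => if (j : ℕ) = (i : ℕ) + 1 then 1 else if j = i then ((i : ℕ) : ℝ) else 0

section BellProductionMatrix

variable {n : ℕ}

lemma vecMul_bellProductionMatrix_zero (hn : 0 < n) (v : ℕ → ℝ) :
    ((fun m : Fin n => v m) ᵥ* bellProductionMatrix n) ⟨0, hn⟩ = 0 := by
  rw [Matrix.vecMul, dotProduct]
  refine Finset.sum_eq_zero fun m _ => ?_
  simp +contextual [bellProductionMatrix, Fin.ext_iff, eq_comm (a := (0 : ℕ))]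

lemma vecMul_bellProductionMatrix_succ {k : ℕ} (hk : k + 1 < n) (v : ℕ → ℝ) :
    ((fun m : Fin n => v m) ᵥ* bellProductionMatrix n) ⟨k + 1, hk⟩ = v k + (k + 1) * v (k + 1) := by
  have hne : (⟨k, by omega⟩ : Fin n) ≠ ⟨k + 1, hk⟩ := by simp
  rw [Matrix.vecMul, dotProduct, Fintype.sum_eq_add _ _ hne]
  · simp [bellProductionMatrix, mul_comm]
  · rintro m ⟨h1, h2⟩
    have h1' : k ≠ m := fun h => h1 (Fin.ext h.symm)
    have h2' : k + 1 ≠ m := fun h => h2 (Fin.ext h.symm)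
    simp [bellProductionMatrix, Fin.ext_iff, h1', h2']

lemma hasDerivAt_stirlingEGF_eq_vecMul (k : Fin n) (t : ℝ) :
    HasDerivAt (stirlingEGF k)
      (((fun m : Fin n => stirlingEGF m t) ᵥ* bellProductionMatrix n) k) t := by
  obtain ⟨_ | k, hk⟩ := k
  · rw [vecMul_bellProductionMatrix_zero hk (fun m => stirlingEGF m t), stirlingEGF_zero]
    exact hasDerivAt_const t 1
  · rw [vecMul_bellProductionMatrix_succ hk (fun m => stirlingEGF m t)]
    exact hasDerivAt_stirlingEGF_succ k t

/-- The row vector `(stirlingEGF k t)ₖ`, placed in row `0` of a square matrix so that the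
differential equation can be solved in the normed algebra of matrices. -/
noncomputable def stirlingRowMatrix (hn : 0 < n) (t : ℝ) : Matrix (Fin n) (Fin n) ℝ :=
  ∑ k : Fin n, stirlingEGF k t • Matrix.single ⟨0, hn⟩ k 1

lemma stirlingRowMatrix_apply (hn : 0 < n) (t : ℝ) (i k : Fin n) :
    stirlingRowMatrix hn t i k = if i = ⟨0, hn⟩ then stirlingEGF k t else 0 := by
  by_cases hi : i = ⟨0, hn⟩
  · subst hi
    simp [stirlingRowMatrix, Matrix.sum_apply, Matrix.single_apply]
  · simp [stirlingRowMatrix, Matrix.sum_apply, hi, Ne.symm hi]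

lemma stirlingRowMatrix_zero (hn : 0 < n) :
    stirlingRowMatrix hn 0 = Matrix.single ⟨0, hn⟩ ⟨0, hn⟩ 1 := by
  ext i k
  simp [stirlingRowMatrix_apply, stirlingEGF_apply_zero, Matrix.single_apply, Fin.ext_iff,
    eq_comm, ite_and]

open scoped Matrix.Norms.Operator in
lemma hasDerivAt_stirlingRowMatrix (hn : 0 < n) (t : ℝ) :
    HasDerivAt (stirlingRowMatrix hn) (stirlingRowMatrix hn t * bellProductionMatrix n) t := by
  rw [stirlingRowMatrix, Matrix.sum_smul_single_mul]
  exact HasDerivAt.fun_sum fun k _ => (hasDerivAt_stirlingEGF_eq_vecMul k t).smul_const _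

end BellProductionMatrix

/-- Let `P_n` be the upper-left `n×n` submatrix of the Bell production matrix
(diagonal `0,1,2,...`, superdiagonal all 1's). Then the first row of `exp(zP_n)`
is `(1, e^z-1, (e^z-1)²/2!, ..., (e^z-1)^{n-1}/(n-1)!)`. -/
theorem stmt9 (n : ℕ) (hn : 1 ≤ n) (Pn : Matrix (Fin n) (Fin n) ℝ)
    (hPn : ∀ i j : Fin n,
      Pn i j = if (j : ℕ) = (i : ℕ) + 1 then 1 else if j = i then ((i : ℕ) : ℝ) else 0) :
    ∀ z : ℝ, ∀ j : Fin n,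
      NormedSpace.exp (z • Pn) ⟨0, hn⟩ j
        = (Real.exp z - 1) ^ (j : ℕ) / (Nat.factorial (j : ℕ) : ℝ) := by
  intro z j
  obtain rfl : Pn = bellProductionMatrix n := Matrix.ext hPn
  open scoped Matrix.Norms.Operator in
  have h := congr_fun₂ (eq_mul_exp_smul_of_hasDerivAt (hasDerivAt_stirlingRowMatrix hn) z) ⟨0, hn⟩ j
  rwa [stirlingRowMatrix_zero, Matrix.single_mul_apply_same, one_mul, stirlingRowMatrix_apply,
    if_pos rfl, eq_comm] at h
end

section
/- Let P be the infinite ℕ×ℕ matrix with entries p_{i,j} = (i+1)_{i+1-j} = (i+1)!/j! for 0 ≤ j ≤ i+1 and p_{i,j} = 0 otherwise, so that its rows are (1,1,0,...), (2,2,1,0,...), (6,6,3,1,0,...), (24,24,12,4,1,0,...). Then the ECO matrix A_P is the Bessel triangle, with entries a_{n,k} = (2n-k)!/(2^{n-k} (n-k)! k!) and diagonal a_{n,n} = 1, and first rows (1), (1,1), (3,3,1), (15,15,6,1), (105,105,45,10,1). -/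
lemma tele15 (n : ℕ) : ∀ m j, j ≤ n → n - j = m →
    ∑ i ∈ Finset.Ico j (n+1),
        ((Nat.factorial (2*n-i) : ℚ) * (i+1)) / (2^(n-i) * (Nat.factorial (n-i) : ℚ))
      = (Nat.factorial (2*n+1-j) : ℚ) / (2^(n-j) * (Nat.factorial (n-j) : ℚ)) := by
  intro m
  induction m with
  | zero =>
    intro j hj hm
    have hjn : j = n := by omega
    subst hjn
    rw [Nat.Ico_succ_singleton, Finset.sum_singleton]
    have e1 : 2*j - j = j := by omega
    have e2 : j - j = 0 := by omega
    have e3 : 2*j + 1 - j = j + 1 := by omega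
    rw [e1, e2, e3, Nat.factorial_succ]
    push_cast
    ring
  | succ m ih =>
    intro j hj hm
    have hjn : j < n := by omega
    rw [Finset.sum_eq_sum_Ico_succ_bot (by omega : j < n + 1)]
    rw [ih (j+1) (by omega) (by omega)]
    have hn : n = j + m + 1 := by omega
    subst hn
    have e1 : 2*(j+m+1) - j = (j+2*m+2) := by ring_nf; omega
    have e2 : (j+m+1) - j = m + 1 := by omega
    have e3 : 2*(j+m+1) + 1 - (j+1) = j+2*m+2 := by ring_nf; omega
    have e4 : (j+m+1) - (j+1) = m := by omega
    have e5 : 2*(j+m+1) + 1 - j = (j+2*m+2) + 1 := by ring_nf; omega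
    rw [e1, e2, e3, e4, e5, Nat.factorial_succ (j+2*m+2), Nat.factorial_succ m]
    have h1 : ((Nat.factorial (j+2*m+2) : ℚ)) ≠ 0 := Nat.cast_ne_zero.2 (Nat.factorial_ne_zero _)
    have h2 : ((Nat.factorial m : ℚ)) ≠ 0 := Nat.cast_ne_zero.2 (Nat.factorial_ne_zero _)
    have h3 : (2:ℚ)^m ≠ 0 := pow_ne_zero _ two_ne_zero
    push_cast
    field_simp
    ring

/-- For the permutation-coefficient production matrix `p_{i,j} = (i+1)!/j!` for
`0 ≤ j ≤ i+1` and 0 otherwise (rows `1,1; 2,2,1; 6,6,3,1; 24,24,12,4,1; ...`),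
the ECO matrix `A_P` (row `n` = `uᵀ Pⁿ`) is the Bessel triangle:
`a_{n,k} = (2n-k)!/(2^{n-k}(n-k)!k!)` for `k ≤ n`, and in particular `a_{n,n} = 1`. -/
theorem stmt15 (P : ℕ → ℕ → ℚ)
    (hP : ∀ i j, P i j = if j ≤ i + 1 then ((Nat.factorial (i + 1) / Nat.factorial j : ℕ) : ℚ)
      else 0)
    (d : ℕ → ℕ → ℚ)
    (hd0 : ∀ k, d 0 k = if k = 0 then 1 else 0)
    (hd : ∀ n k, d (n + 1) k = ∑ i ∈ Finset.range (n + 1), d n i * P i k) :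
    (∀ n k, k ≤ n →
      d n k = (Nat.factorial (2 * n - k) : ℚ)
        / (2 ^ (n - k) * (Nat.factorial (n - k) : ℚ) * (Nat.factorial k : ℚ))) ∧
    (∀ n, d n n = 1) := by
  have main : ∀ n k, k ≤ n →
      d n k = (Nat.factorial (2 * n - k) : ℚ)
        / (2 ^ (n - k) * (Nat.factorial (n - k) : ℚ) * (Nat.factorial k : ℚ)) := by
    intro n
    induction n with
    | zero =>
      intro k hk
      interval_cases k
      simp [hd0, Nat.factorial]
    | succ n ih =>
      intro k hk
      rw [hd]
      have hterm : ∀ i ∈ Finset.range (n+1), d n i * P i k =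
          if k ≤ i + 1 then
            (((Nat.factorial (2*n-i) : ℚ) * (i+1)) / (2^(n-i) * (Nat.factorial (n-i) : ℚ)))
              / (Nat.factorial k : ℚ)
          else 0 := by
        intro i hi
        have hin : i ≤ n := by
          have := Finset.mem_range.1 hi; omega
        rw [ih i hin, hP]
        split
        · next h =>
          rw [Nat.cast_div (Nat.factorial_dvd_factorial h)
              (Nat.cast_ne_zero.2 (Nat.factorial_ne_zero _))]
          rw [Nat.factorial_succ i]
          have h1 : ((Nat.factorial i : ℚ)) ≠ 0 := Nat.cast_ne_zero.2 (Nat.factorial_ne_zero _)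
          have h2 : ((Nat.factorial (n-i) : ℚ)) ≠ 0 := Nat.cast_ne_zero.2 (Nat.factorial_ne_zero _)
          have h3 : ((Nat.factorial k : ℚ)) ≠ 0 := Nat.cast_ne_zero.2 (Nat.factorial_ne_zero _)
          have h4 : (2:ℚ)^(n-i) ≠ 0 := pow_ne_zero _ two_ne_zero
          push_cast
          field_simp
        · exact mul_zero _
      rw [Finset.sum_congr rfl hterm]
      rcases Nat.eq_zero_or_eq_succ_pred k with hk0 | hk1
      · subst hk0
        have hall : ∀ i ∈ Finset.range (n+1), (if (0:ℕ) ≤ i + 1 then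
            (((Nat.factorial (2*n-i) : ℚ) * (i+1)) / (2^(n-i) * (Nat.factorial (n-i) : ℚ)))
              / (Nat.factorial 0 : ℚ) else 0) =
            (((Nat.factorial (2*n-i) : ℚ) * (i+1)) / (2^(n-i) * (Nat.factorial (n-i) : ℚ))) := by
          intro i _
          rw [if_pos (Nat.zero_le _)]
          simp [Nat.factorial]
        rw [Finset.sum_congr rfl hall, Finset.range_eq_Ico,
          tele15 n n 0 (Nat.zero_le _) (by omega)]
        have e1 : 2*n + 1 - 0 = 2*n+1 := by omega
        have e2 : n - 0 = n := by omega
        have e3 : 2*(n+1) - 0 = (2*n+1)+1 := by omega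
        have e4 : (n+1) - 0 = n+1 := by omega
        rw [e1, e2, e3, e4, Nat.factorial_succ (2*n+1), Nat.factorial_succ n]
        have h1 : ((Nat.factorial (2*n+1) : ℚ)) ≠ 0 := Nat.cast_ne_zero.2 (Nat.factorial_ne_zero _)
        have h2 : ((Nat.factorial n : ℚ)) ≠ 0 := Nat.cast_ne_zero.2 (Nat.factorial_ne_zero _)
        have h3 : (2:ℚ)^n ≠ 0 := pow_ne_zero _ two_ne_zero
        push_cast
        field_simp
        ring
      · obtain ⟨j, rfl⟩ : ∃ j, k = j + 1 := ⟨k - 1, by omega⟩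
        have hjn : j ≤ n := by omega
        rw [Finset.range_eq_Ico,
          ← Finset.sum_Ico_consecutive _ (Nat.zero_le j) (by omega : j ≤ n + 1)]
        have hz : ∀ i ∈ Finset.Ico 0 j, (if j + 1 ≤ i + 1 then
            (((Nat.factorial (2*n-i) : ℚ) * (i+1)) / (2^(n-i) * (Nat.factorial (n-i) : ℚ)))
              / (Nat.factorial (j+1) : ℚ) else 0) = 0 := by
          intro i hi
          rw [if_neg]
          have := (Finset.mem_Ico.1 hi).2
          omega
        rw [Finset.sum_congr rfl hz, Finset.sum_const_zero, zero_add]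
        have hp : ∀ i ∈ Finset.Ico j (n+1), (if j + 1 ≤ i + 1 then
            (((Nat.factorial (2*n-i) : ℚ) * (i+1)) / (2^(n-i) * (Nat.factorial (n-i) : ℚ)))
              / (Nat.factorial (j+1) : ℚ) else 0) =
            (((Nat.factorial (2*n-i) : ℚ) * (i+1)) / (2^(n-i) * (Nat.factorial (n-i) : ℚ)))
              / (Nat.factorial (j+1) : ℚ) := by
          intro i hi
          rw [if_pos]
          have := (Finset.mem_Ico.1 hi).1
          omega
        rw [Finset.sum_congr rfl hp, ← Finset.sum_div,
          tele15 n (n-j) j hjn rfl]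
        have e1 : 2*(n+1) - (j+1) = 2*n+1-j := by omega
        have e2 : (n+1) - (j+1) = n-j := by omega
        rw [e1, e2, div_div, mul_assoc]
  refine ⟨main, fun n => ?_⟩
  rw [main n n le_rfl]
  have e1 : 2*n - n = n := by omega
  have e2 : n - n = 0 := by omega
  rw [e1, e2]
  have h1 : ((Nat.factorial n : ℚ)) ≠ 0 := Nat.cast_ne_zero.2 (Nat.factorial_ne_zero _)
  simp [Nat.factorial, div_self h1]
end

section
/- Let P be the infinite ℕ×ℕ matrix with p_{i,0} = i+1 and p_{i,j} = 1 for 1 ≤ j ≤ i+1, p_{i,j} = 0 for j > i+1 (rows: 1,1; 2,1,1; 3,1,1,1; ...). Then the ECO matrix A_P satisfies: the sum of the entries in row n of A_P equals C(2n, n), the central binomial coefficient, for all n ≥ 0. -/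
/-!
Row `n + 1` of the ECO matrix is `d (n + 1) k = C(2n + 1 - k, n)` for `k ≤ n + 1`. Read backwards,
the row is `C(n, n), C(n + 1, n), …, C(2n + 1, n)`, so its sum is `C(2n + 2, n + 1)` by the
hockey-stick identity. The closed form propagates from row to row for the same reason: a column
`k ≥ 1` of `P` picks out an initial segment of the reversed row (one hockey stick), and column `0`,
with weights `i + 1`, is a double sum of the reversed row (two hockey sticks).
-/

open Finset

def prodMatrix (i j : ℕ) : ℕ :=
  if j = 0 then i + 1 else if j ≤ i + 1 then 1 else 0

namespace Finset

variable {M : Type*} [AddCommMonoid M]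

theorem sum_range_succ_reflect₂ (f : ℕ → ℕ → M) (m : ℕ) :
    ∑ i ∈ range (m + 1), f (m - i) i = ∑ j ∈ range (m + 1), f j (m - j) := by
  rw [← sum_range_reflect]
  refine sum_congr rfl fun j hj => ?_
  rw [mem_range] at hj
  congr 1; omega

theorem sum_range_sum_range_succ (f : ℕ → M) (m : ℕ) :
    ∑ t ∈ range (m + 1), ∑ j ∈ range (t + 1), f j = ∑ j ∈ range (m + 1), (m + 1 - j) • f j := by
  rw [sum_comm' (t' := range (m + 1)) (s' := fun j => Ico j (m + 1))]
  · simp only [sum_const, Nat.card_Ico]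
  · intro t j
    simp only [mem_range, mem_Ico]
    omega

end Finset

theorem Nat.sum_range_mul_add_choose (m n : ℕ) :
    ∑ j ∈ range (m + 1), (m + 1 - j) * (j + n).choose n = (m + n + 2).choose (n + 2) := by
  simp only [← smul_eq_mul, ← sum_range_sum_range_succ, sum_range_add_choose, add_assoc]

theorem sum_sub_add_choose (n : ℕ) :
    ∑ k ∈ range (n + 2), (n + 1 - k + n).choose n = (2 * (n + 1)).choose (n + 1) := by
  refine (sum_range_succ_reflect₂ (fun a _ => (a + n).choose n) (n + 1)).trans ?_
  rw [Nat.sum_range_add_choose, two_mul, ← add_assoc]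

theorem sum_sub_add_choose_mul_prodMatrix (n k : ℕ) (hk : k ≤ n + 2) :
    ∑ i ∈ range (n + 2), (n + 1 - i + n).choose n * prodMatrix i k
      = (n + 2 - k + (n + 1)).choose (n + 1) := by
  refine (sum_range_succ_reflect₂ (fun a b => (a + n).choose n * prodMatrix b k) (n + 1)).trans ?_
  rcases Nat.eq_zero_or_pos k with rfl | hk0
  · have weights : ∀ j ∈ range (n + 2),
        (j + n).choose n * prodMatrix (n + 1 - j) 0 = (n + 2 - j) * (j + n).choose n := by
      intro j hj
      rw [mem_range] at hj
      rw [prodMatrix, if_pos rfl, mul_comm]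
      congr 1
      omega
    rw [sum_congr rfl weights, Nat.sum_range_mul_add_choose (n + 1) n, Nat.sub_zero,
      show n + 1 + n + 2 = (n + 2) + (n + 1) by ring, Nat.choose_symm_add]
  · rw [← sum_range_add_sum_Ico _ (show n + 2 - k + 1 ≤ n + 2 by omega),
      sum_eq_zero (s := Ico _ _), add_zero, ← add_assoc, ← Nat.sum_range_add_choose]
    · refine sum_congr rfl fun j hj => ?_
      rw [mem_range] at hj
      rw [prodMatrix, if_neg hk0.ne', if_pos (by omega), mul_one]
    · intro j hj
      rw [mem_Ico] at hj
      rw [prodMatrix, if_neg hk0.ne', if_neg (by omega), mul_zero]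

/-- For the production matrix `P` with `p_{i,0} = i+1`, `p_{i,j} = 1` for
`1 ≤ j ≤ i+1` and 0 otherwise, the row sums of the ECO matrix `A_P`
(row `n` = `uᵀ Pⁿ`) are the central binomial coefficients `C(2n,n)`. -/
theorem stmt18 (P : ℕ → ℕ → ℚ)
    (hP : ∀ i j, P i j = if j = 0 then ((i : ℚ) + 1) else if j ≤ i + 1 then 1 else 0)
    (d : ℕ → ℕ → ℚ)
    (hd0 : ∀ k, d 0 k = if k = 0 then 1 else 0)
    (hd : ∀ n k, d (n + 1) k = ∑ i ∈ Finset.range (n + 1), d n i * P i k) :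
    ∀ n, ∑ k ∈ Finset.range (n + 1), d n k = (Nat.choose (2 * n) n : ℚ) := by
  have hP_cast : ∀ i j, P i j = prodMatrix i j := by
    intro i j
    rw [hP, prodMatrix]
    split_ifs <;> simp
  have row : ∀ n, ∀ k ≤ n + 1, d (n + 1) k = ((n + 1 - k + n).choose n : ℚ) := by
    intro n
    induction n with
    | zero =>
      intro k hk
      interval_cases k <;> simp [hd, hd0, hP]
    | succ n ih =>
      intro k hk
      rw [hd, sum_congr rfl fun i hi => by rw [ih i (mem_range_succ_iff.mp hi), hP_cast i k]]
      exact_mod_cast sum_sub_add_choose_mul_prodMatrix n k hk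
  rintro (_ | n)
  · simp [hd0]
  · rw [sum_congr rfl fun k hk => row n k (mem_range_succ_iff.mp hk)]
    exact_mod_cast sum_sub_add_choose n
end
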